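/- If F is an m-uniform family with no m+1 disjointly representable sets, and every set in F contains a fixed set Y of size s, then |F| ≤ C(2m - s, m). -/

import Mathlib

/-!
Removing the common core `Y` leaves an `(m - s)`-uniform family with no `m + 1` disjointly
representable members (a representative of `G \ Y` lies outside `Y`), so it suffices to prove the
Frankl–Pach bound `C(r + k, k)` for `r`-uniform families without `k + 1` disjointly representable
members.

For such a family every member `A` has a set `T` of at most `k` points that misses `A` and
meets every other member: in an inclusion-minimal such `T` each point is the only point of `T`
in some member, and `k + 1` of these members would be disjointly representable. Send the points
injectively into a field and attach to `A` the product over `p ∈ A` of the linear forms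
`∑ j ≤ k, p ^ j X j`, a homogeneous polynomial of degree `r` in `k + 1` variables. At the
coefficient vector of `∏ c ∈ T, (t - c)` the form of `G` takes the value
`∏ p ∈ G, ∏ c ∈ T, (p - c)`, which is nonzero exactly for `G = A`. So these polynomials are
linearly independent, and there are at most as many as the dimension `C(r + k, k)` of the
homogeneous polynomials of degree `r` in `k + 1` variables.
-/

def DisjRep {α : Type*} {k : ℕ} (A : Fin k → Finset α) : Prop :=
  ∃ x : Fin k → α, ∀ i j, x i ∈ A j ↔ i = j

open Finset MvPolynomial

section FranklPach

variable {α : Type*}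

def DisjRepFree (k : ℕ) (F : Finset (Finset α)) : Prop :=
  ¬ ∃ g : Fin k → Finset α, Function.Injective g ∧ (∀ i, g i ∈ F) ∧ DisjRep g

theorem DisjRep.injective {k : ℕ} {A : Fin k → Finset α} (h : DisjRep A) :
    Function.Injective A := by
  obtain ⟨x, hx⟩ := h
  intro i j hij
  exact (hx i j).1 (hij ▸ (hx i i).2 rfl)

theorem DisjRepFree.image_sdiff [DecidableEq α] {k : ℕ} {F : Finset (Finset α)}
    (hDR : DisjRepFree k F) (Y : Finset α) : DisjRepFree k (F.image (· \ Y)) := by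
  rintro ⟨g, hg_inj, hgF, x, hx⟩
  choose G hGF hGg using fun i ↦ mem_image.1 (hgF i)
  have hxY : ∀ i, x i ∉ Y := fun i ↦ (mem_sdiff.1 (hGg i ▸ (hx i i).2 rfl)).2
  refine hDR ⟨G, fun i j hij ↦ hg_inj ?_, hGF, x, fun i j ↦ ?_⟩
  · rw [← hGg i, ← hGg j, hij]
  · rw [← hx i j, ← hGg j, mem_sdiff, and_iff_left (hxY i)]

theorem DisjRepFree.card_le_of_forall_exists_private [DecidableEq α] {k : ℕ}
    {F : Finset (Finset α)} (hDR : DisjRepFree (k + 1) F) {T : Finset α}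
    (hT : ∀ x ∈ T, ∃ G ∈ F, x ∈ G ∧ Disjoint G (T.erase x)) : T.card ≤ k := by
  by_contra! hk
  obtain ⟨x⟩ : Nonempty (Fin (k + 1) ↪ T) :=
    Function.Embedding.nonempty_of_card_le (by simpa using hk)
  choose G hGF hxG hGT using fun i ↦ hT (x i) (x i).2
  have hG : DisjRep G := by
    refine ⟨fun i ↦ x i, fun i j ↦ ⟨fun hij ↦ ?_, fun hij ↦ hij ▸ hxG i⟩⟩
    by_contra hne
    refine disjoint_left.1 (hGT j) hij (mem_erase.2 ⟨?_, (x i).2⟩)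
    exact fun h ↦ hne (x.injective (Subtype.ext h))
  exact hDR ⟨G, hG.injective, hGF, hG⟩

theorem DisjRepFree.exists_transversal [DecidableEq α] {k : ℕ} {F : Finset (Finset α)}
    (hDR : DisjRepFree (k + 1) F) (hanti : IsAntichain (· ⊆ ·) (F : Set (Finset α)))
    {A : Finset α} (hA : A ∈ F) :
    ∃ T : Finset α, T.card ≤ k ∧ ∀ G ∈ F, (Disjoint G T ↔ G = A) := by
  let IsTransversal (T : Finset α) : Prop := ∀ G ∈ F, (Disjoint G T ↔ G = A)
  have hall : IsTransversal (F.sup (· \ A)) := by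
    intro G hG
    refine ⟨fun hdisj ↦ ?_, ?_⟩
    · by_contra hne
      obtain ⟨p, hpG, hpA⟩ := not_subset.1 (hanti hG hA hne)
      exact disjoint_left.1 hdisj hpG (mem_sup.2 ⟨G, hG, mem_sdiff.2 ⟨hpG, hpA⟩⟩)
    · rintro rfl
      exact Finset.disjoint_sup_right.2 fun _ _ ↦ disjoint_sdiff
  obtain ⟨T, hT, hTmin⟩ := exists_minimal_of_wellFoundedLT IsTransversal ⟨_, hall⟩
  refine ⟨T, hDR.card_le_of_forall_exists_private fun x hx ↦ ?_, hT⟩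
  have hnot : ¬ IsTransversal (T.erase x) := fun h ↦
    notMem_erase x T (hTmin h (erase_subset x T) hx)
  obtain ⟨G, hG, hGx⟩ : ∃ G ∈ F, ¬(Disjoint G (T.erase x) ↔ G = A) := by
    simpa [IsTransversal] using hnot
  have hGA : G ≠ A := by
    rintro rfl
    exact hGx ⟨fun _ ↦ rfl, fun _ ↦ ((hT G hG).2 rfl).mono_right (erase_subset x T)⟩
  have hGT : Disjoint G (T.erase x) := by tauto
  refine ⟨G, hG, ?_, hGT⟩
  by_contra hxG
  refine hGA ((hT G hG).1 (disjoint_left.2 fun p hpG hpT ↦ ?_))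
  exact disjoint_left.1 hGT hpG (mem_erase.2 ⟨fun h ↦ hxG (h ▸ hpG), hpT⟩)

theorem LinearIndependent.of_pairwise_dual_eq_zero_ne_zero {ι K M : Type*} [Field K]
    [AddCommGroup M] [Module K M] (v : ι → M) (f : ι → Module.Dual K M)
    (h1 : Pairwise fun i j ↦ f i (v j) = 0) (h2 : ∀ i, f i (v i) ≠ 0) :
    LinearIndependent K v :=
  .of_pairwise_dual_eq_zero_one v (fun i ↦ (f i (v i))⁻¹ • f i)
    (fun i j hij ↦ by simp [h1 hij]) (fun i ↦ by simp [h2 i])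

theorem MvPolynomial.finrank_homogeneousSubmodule (σ K : Type*) [Fintype σ] [Field K] (n : ℕ) :
    Module.finrank K (homogeneousSubmodule σ K n) = (Fintype.card σ + n - 1).choose n := by
  classical
  have hdeg : {d : σ →₀ ℕ | d.degree = n} = (univ.finsuppAntidiag n : Finset (σ →₀ ℕ)) := by
    ext d
    simp [Finsupp.degree_eq_sum]
  rw [homogeneousSubmodule_eq_finsupp_supported, hdeg,
    (AddMonoidAlgebra.supportedEquivFinsupp _).finrank_eq, Module.finrank_finsupp_self]
  exact (Fintype.card_coe _).trans (by rw [card_finsuppAntidiag_nat_eq_choose, card_univ])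

variable {K : Type*} [Field K]

noncomputable def momentForm (k : ℕ) (a : K) : MvPolynomial (Fin (k + 1)) K :=
  ∑ j : Fin (k + 1), C (a ^ (j : ℕ)) * X j

theorem isHomogeneous_momentForm (k : ℕ) (a : K) : (momentForm k a).IsHomogeneous 1 :=
  IsHomogeneous.sum _ _ _ fun j _ ↦ isHomogeneous_C_mul_X _ j

def coeffVector (k : ℕ) (q : Polynomial K) : Fin (k + 1) → K :=
  fun j ↦ q.coeff j

theorem eval_coeffVector_momentForm {k : ℕ} {q : Polynomial K} (hq : q.natDegree ≤ k) (a : K) :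
    eval (coeffVector k q) (momentForm k a) = q.eval a := by
  rw [Polynomial.eval_eq_sum_range' (Nat.lt_succ_of_le hq), ← Fin.sum_univ_eq_sum_range]
  simp [momentForm, coeffVector, mul_comm]

noncomputable def prodMomentForm (ι : α → K) (k : ℕ) (A : Finset α) :
    MvPolynomial (Fin (k + 1)) K :=
  ∏ p ∈ A, momentForm k (ι p)

theorem isHomogeneous_prodMomentForm (ι : α → K) (k : ℕ) (A : Finset α) :
    (prodMomentForm ι k A).IsHomogeneous A.card := by
  simpa [prodMomentForm] using
    IsHomogeneous.prod A _ _ fun p _ ↦ isHomogeneous_momentForm k (ι p)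

noncomputable def vanishingCoeffs (ι : α → K) (k : ℕ) (T : Finset α) : Fin (k + 1) → K :=
  coeffVector k (∏ c ∈ T, (Polynomial.X - Polynomial.C (ι c)))

theorem eval_prodMomentForm_vanishingCoeffs (ι : α → K) {k : ℕ} (A : Finset α)
    {T : Finset α} (hT : T.card ≤ k) :
    eval (vanishingCoeffs ι k T) (prodMomentForm ι k A) = ∏ p ∈ A, ∏ c ∈ T, (ι p - ι c) := by
  have hdeg : (∏ c ∈ T, (Polynomial.X - Polynomial.C (ι c))).natDegree ≤ k := by
    rwa [Polynomial.natDegree_prod_of_monic _ _ fun c _ ↦ Polynomial.monic_X_sub_C (ι c),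
      Finset.sum_congr rfl fun c _ ↦ Polynomial.natDegree_X_sub_C (ι c), sum_const, smul_eq_mul,
      mul_one]
  simp only [prodMomentForm, vanishingCoeffs, map_prod, eval_coeffVector_momentForm hdeg,
    Polynomial.eval_prod, Polynomial.eval_sub, Polynomial.eval_X, Polynomial.eval_C]

theorem eval_prodMomentForm_vanishingCoeffs_ne_zero_iff {ι : α → K} (hι : ι.Injective) {k : ℕ}
    {A T : Finset α} (hT : T.card ≤ k) :
    eval (vanishingCoeffs ι k T) (prodMomentForm ι k A) ≠ 0 ↔ Disjoint A T := by
  simp [eval_prodMomentForm_vanishingCoeffs ι A hT, prod_eq_zero_iff, sub_eq_zero, hι.eq_iff,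
    disjoint_left]

theorem card_le_choose_of_forall_exists_transversal {ι : α → K} (hι : ι.Injective)
    {r k : ℕ} {F : Finset (Finset α)} (hF : (F : Set (Finset α)).Sized r)
    (hT : ∀ A ∈ F, ∃ T : Finset α, T.card ≤ k ∧ ∀ G ∈ F, (Disjoint G T ↔ G = A)) :
    F.card ≤ (r + k).choose k := by
  choose T hTk hTA using hT
  let v : F → homogeneousSubmodule (Fin (k + 1)) K r := fun A ↦
    ⟨prodMomentForm ι k A, hF A.2 ▸ isHomogeneous_prodMomentForm ι k A⟩
  let f : F → Module.Dual K (homogeneousSubmodule (Fin (k + 1)) K r) := fun A ↦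
    (aeval (vanishingCoeffs ι k (T A A.2))).toLinearMap ∘ₗ Submodule.subtype _
  have hv : LinearIndependent K v := by
    refine .of_pairwise_dual_eq_zero_ne_zero v f (fun A G hAG ↦ ?_) fun A ↦ ?_
    · change eval _ (prodMomentForm ι k G) = 0
      by_contra h
      exact hAG (Subtype.ext ((hTA A A.2 G G.2).1
        ((eval_prodMomentForm_vanishingCoeffs_ne_zero_iff hι (hTk A A.2)).1 h))).symm
    · change eval _ (prodMomentForm ι k A) ≠ 0
      exact (eval_prodMomentForm_vanishingCoeffs_ne_zero_iff hι (hTk A A.2)).2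
        ((hTA A A.2 A A.2).2 rfl)
  have : Module.Finite K (homogeneousSubmodule (Fin (k + 1)) K r) :=
    Module.Finite.iff_fg.mpr (homogeneousSubmodule_fg _ _ r)
  calc F.card = Fintype.card F := (Fintype.card_coe F).symm
    _ ≤ _ := hv.fintype_card_le_finrank
    _ = (r + k).choose k := by
      rw [finrank_homogeneousSubmodule, Fintype.card_fin, show k + 1 + r - 1 = r + k by omega,
        Nat.choose_symm_add]

theorem DisjRepFree.card_le_choose [DecidableEq α] {r k : ℕ} {F : Finset (Finset α)}
    (hDR : DisjRepFree (k + 1) F) (hF : (F : Set (Finset α)).Sized r) :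
    F.card ≤ (r + k).choose k :=
  -- the points become indeterminates of a rational function field, so that they are distinct
  card_le_choose_of_forall_exists_transversal
    ((IsFractionRing.injective (MvPolynomial α ℚ) (FractionRing (MvPolynomial α ℚ))).comp
      (X_injective (R := ℚ)))
    hF fun _ hA ↦ hDR.exists_transversal hF.isAntichain hA

end FranklPach

theorem stmt_13_general {α : Type*} (m s : ℕ) (hsm : s ≤ m)
    (F : Finset (Finset α)) (hcard : ∀ A ∈ F, A.card = m)
    (hnoDR : ¬ ∃ g : Fin (m + 1) → Finset α,
      Function.Injective g ∧ (∀ i, g i ∈ F) ∧ DisjRep g)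
    (Y : Finset α) (hY : Y.card = s) (hYsub : ∀ A ∈ F, Y ⊆ A) :
    F.card ≤ Nat.choose (2 * m - s) m := by
  classical
  have hinj : Set.InjOn (· \ Y) (F : Set (Finset α)) := fun A hA B hB hAB ↦ by
    rw [← sdiff_union_of_subset (hYsub A hA), ← sdiff_union_of_subset (hYsub B hB)]
    exact congrArg (· ∪ Y) hAB
  have hsized : ((F.image (· \ Y) : Finset (Finset α)) : Set (Finset α)).Sized (m - s) := by
    simp only [Set.Sized, coe_image, Set.forall_mem_image]
    intro A hA
    rw [card_sdiff_of_subset (hYsub A hA), hcard A hA, hY]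
  calc F.card = (F.image (· \ Y)).card := (card_image_of_injOn hinj).symm
    _ ≤ (m - s + m).choose m :=
      DisjRepFree.card_le_choose (DisjRepFree.image_sdiff hnoDR Y) hsized
    _ = (2 * m - s).choose m := by rw [show m - s + m = 2 * m - s by omega]

theorem stmt_13 {α : Type*} [DecidableEq α] (m s : ℕ) (hsm : s ≤ m)
    (F : Finset (Finset α)) (hcard : ∀ A ∈ F, A.card = m)
    (hnoDR : ¬ ∃ g : Fin (m + 1) → Finset α,
      Function.Injective g ∧ (∀ i, g i ∈ F) ∧ DisjRep g)
    (Y : Finset α) (hY : Y.card = s) (hYsub : ∀ A ∈ F, Y ⊆ A) :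
    F.card ≤ Nat.choose (2 * m - s) m :=
  stmt_13_general m s hsm F hcard hnoDR Y hY hYsub
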